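/- Equal angles at KKT points: suppose the prototypes w_1, …, w_k form a simplex equiangular tight frame, y ∈ {1,…,k}, h ∈ E with ‖h‖ = 1, and λ > 0 satisfy the stationarity condition Σ_{c=1}^k p_c(h)·w_c − 2·w_y + 2λ·h = 0, where p_c(h) = exp(⟨w_c, h⟩) / Σ_{c'=1}^k exp(⟨w_{c'}, h⟩). Then ⟨h, w_c⟩ = ⟨h, w_{c'}⟩ (equivalently p_c(h) = p_{c'}(h)) for all c, c' with c ≠ y and c' ≠ y. -/

import Mathlib

open scoped RealInnerProductSpace

/-- Softmax probabilities `p_c(h) = exp⟪w_c, h⟫ / Σ_{c'} exp⟪w_{c'}, h⟫`. -/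
noncomputable def softmaxP {d k : ℕ} (w : Fin k → EuclideanSpace ℝ (Fin d))
    (h : EuclideanSpace ℝ (Fin d)) (c : Fin k) : ℝ :=
  Real.exp ⟪w c, h⟫ / ∑ c' : Fin k, Real.exp ⟪w c', h⟫

/-- **Equal angles at KKT points.** Suppose the unit-norm prototypes form a simplex ETF,
`‖h‖ = 1`, and `λ > 0` satisfy the stationarity (KKT) condition
`Σ_c p_c(h)·w_c − 2·w_y + 2λ·h = 0`. Then `⟪h, w_c⟫ = ⟪h, w_{c'}⟫` (equivalently
`p_c(h) = p_{c'}(h)`) for all `c, c'` with `c ≠ y` and `c' ≠ y`. -/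
theorem kkt_equal_angles (d k : ℕ) (hd : 0 < d) (hk : 2 ≤ k)
    (w : Fin k → EuclideanSpace ℝ (Fin d)) (hw : ∀ c, ‖w c‖ = 1)
    (hetf : ∀ c c' : Fin k, c ≠ c' → ⟪w c, w c'⟫ = -1 / ((k : ℝ) - 1))
    (y : Fin k) (h : EuclideanSpace ℝ (Fin d)) (hh : ‖h‖ = 1)
    (lam : ℝ) (hlam : 0 < lam)
    (hstat : (∑ c : Fin k, softmaxP w h c • w c) - (2 : ℝ) • w y + (2 * lam) • h = 0) :
    ∀ c c' : Fin k, c ≠ y → c' ≠ y →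
      ⟪h, w c⟫ = ⟪h, w c'⟫ ∧ softmaxP w h c = softmaxP w h c' := by
  set S : ℝ := ∑ c' : Fin k, Real.exp ⟪w c', h⟫ with hS
  have hSpos : 0 < S := Finset.sum_pos (fun i _ => Real.exp_pos _) ⟨y, Finset.mem_univ y⟩
  have hkpos : (0:ℝ) < (k:ℝ) - 1 := by
    have : (2:ℝ) ≤ (k:ℝ) := by exact_mod_cast hk
    linarith
  have hsum1 : ∑ c : Fin k, softmaxP w h c = 1 := by
    simp only [softmaxP, ← hS]
    rw [← Finset.sum_div]
    exact div_self (ne_of_gt hSpos)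
  -- key equation for each c ≠ y
  have key : ∀ c : Fin k, c ≠ y →
      2 * lam * ⟪w c, h⟫ + ((k:ℝ) / ((k:ℝ) - 1)) * softmaxP w h c = -1 / ((k:ℝ) - 1) := by
    intro c hc
    have h0 : ⟪(∑ c : Fin k, softmaxP w h c • w c) - (2 : ℝ) • w y + (2 * lam) • h, w c⟫ = 0 := by
      rw [hstat]; simp
    rw [inner_add_left, inner_sub_left, sum_inner, inner_smul_left, inner_smul_left] at h0
    simp only [RCLike.inner_apply, conj_trivial] at h0
    have hsum : (∑ b : Fin k, ⟪softmaxP w h b • w b, w c⟫)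
        = -1 / ((k:ℝ) - 1) + softmaxP w h c * ((k:ℝ) / ((k:ℝ) - 1)) := by
      have : ∀ b : Fin k, ⟪softmaxP w h b • w b, w c⟫
          = softmaxP w h b * (-1 / ((k:ℝ) - 1))
            + (if b = c then softmaxP w h b * (1 + 1 / ((k:ℝ) - 1)) else 0) := by
        intro b
        rw [inner_smul_left]
        by_cases hbc : b = c
        · subst hbc
          have : ⟪w b, w b⟫ = (1:ℝ) := by
            rw [real_inner_self_eq_norm_sq, hw b]; norm_num
          rw [this]
          simp only [if_pos rfl, conj_trivial, if_true]
          have hk1 := hkpos.ne'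
          field_simp
          ring
        · rw [hetf b c hbc]
          simp [hbc]
      rw [Finset.sum_congr rfl (fun b _ => this b), Finset.sum_add_distrib,
        Finset.sum_ite_eq' Finset.univ c (fun b => softmaxP w h b * (1 + 1 / ((k:ℝ) - 1)))]
      simp only [Finset.mem_univ, if_pos]
      rw [← Finset.sum_mul, hsum1]
      field_simp
      ring
    rw [hsum, hetf y c (Ne.symm hc)] at h0
    have hcomm : ⟪h, w c⟫ = ⟪w c, h⟫ := real_inner_comm _ _
    rw [hcomm] at h0
    ring_nf at h0 ⊢
    linarith
  -- strict monotonicity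
  have hmono : StrictMono (fun t : ℝ => 2 * lam * t + ((k:ℝ) / (((k:ℝ) - 1) * S)) * Real.exp t) := by
    have h1 : StrictMono (fun t : ℝ => 2 * lam * t) :=
      fun a b hab => by
        have : 0 < 2 * lam := by linarith
        exact (mul_lt_mul_iff_right₀ this).2 hab
    have hApos : 0 < (k:ℝ) / (((k:ℝ) - 1) * S) := by
      apply div_pos
      · exact_mod_cast lt_of_lt_of_le (by norm_num) hk
      · exact mul_pos hkpos hSpos
    have h2 : StrictMono (fun t : ℝ => ((k:ℝ) / (((k:ℝ) - 1) * S)) * Real.exp t) :=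
      fun a b hab => (mul_lt_mul_iff_right₀ hApos).2 (Real.exp_lt_exp.2 hab)
    exact h1.add h2
  intro c c' hc hc'
  have e1 := key c hc
  have e2 := key c' hc'
  have hp : ∀ b : Fin k, ((k:ℝ) / ((k:ℝ) - 1)) * softmaxP w h b
      = ((k:ℝ) / (((k:ℝ) - 1) * S)) * Real.exp ⟪w b, h⟫ := by
    intro b
    rw [softmaxP, ← hS]
    field_simp
  rw [hp c] at e1
  rw [hp c'] at e2
  have heq : (fun t : ℝ => 2 * lam * t + ((k:ℝ) / (((k:ℝ) - 1) * S)) * Real.exp t) ⟪w c, h⟫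
      = (fun t : ℝ => 2 * lam * t + ((k:ℝ) / (((k:ℝ) - 1) * S)) * Real.exp t) ⟪w c', h⟫ := by
    simp only []
    rw [e1, e2]
  have ht : ⟪w c, h⟫ = ⟪w c', h⟫ := hmono.injective heq
  refine ⟨by rw [real_inner_comm, ht, real_inner_comm], ?_⟩
  simp [softmaxP, ht]
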